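/- Let Θ ∈ ℂ^{n×m}, B = [Θ | conj(Θ)] ∈ ℂ^{n×2m}, and B̂ = [Re(Θ) | −Im(Θ)] ∈ ℝ^{n×2m}, where Re and Im are taken entrywise. Let Q = (1/√2) [[I_m, i I_m], [I_m, −i I_m]] ∈ ℂ^{2m×2m} (block form), which satisfies QᴴQ = I_{2m}. Suppose B̂ V̂_B = Û_B Ŝ_B where V̂_B ∈ ℝ^{2m×2m} satisfies V̂_Bᵀ V̂_B = I, Û_B ∈ ℝ^{n×2m} satisfies Û_Bᵀ Û_B = I, and Ŝ_B ∈ ℝ^{2m×2m} is diagonal with nonnegative entries. Then Ṽ_B = Q V̂_B satisfies B Ṽ_B = Û_B (√2 · Ŝ_B) and Ṽ_Bᴴ Ṽ_B = I; that is, Ṽ_B and Û_B are orthonormal bases of right and left singular vectors of B, whose singular values are √2 times those of B̂. -/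

import Mathlib

/-!
Right-multiplying `B = [Θ | conj Θ]` by the unitary `Q` turns its two column blocks into
`Θ + conj Θ = 2 Re Θ` and `i (Θ - conj Θ) = -2 Im Θ`, so `B Q = √2 B̂` (`Q` carries the
factor `1/√2`). Hence `B (Q V̂) = √2 B̂ V̂ = Û (√2 Ŝ)`, and `Q V̂` is unitary as the product of
the unitary `Q` with the real orthogonal `V̂`.
-/

open Matrix ComplexConjugate

noncomputable def complexificationQ (κ : Type*) [DecidableEq κ] : Matrix (κ ⊕ κ) (κ ⊕ κ) ℂ :=
  (Real.sqrt 2 : ℂ)⁻¹ • fromBlocks 1 (Complex.I • 1) 1 (-(Complex.I • 1))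

lemma Complex.ofReal_sqrt_two_sq : (Real.sqrt 2 : ℂ) ^ 2 = 2 := by
  norm_cast
  exact Real.sq_sqrt zero_le_two

lemma Matrix.conjTranspose_map_ofReal {ι κ : Type*} (V : Matrix ι κ ℝ) :
    (V.map ((↑) : ℝ → ℂ))ᴴ = Vᵀ.map (↑) := by
  rw [← conjTranspose_map _ fun x => (Complex.conj_ofReal x).symm,
    conjTranspose_eq_transpose_of_trivial]

section

variable {ι κ : Type*} [Fintype κ] [DecidableEq κ]

lemma Matrix.conjTranspose_map_ofReal_mul_self {V : Matrix κ κ ℝ} (hV : Vᵀ * V = 1) :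
    (V.map ((↑) : ℝ → ℂ))ᴴ * V.map (↑) = 1 := by
  rw [conjTranspose_map_ofReal]
  calc _ = (Vᵀ * V).map Complex.ofRealHom := (Matrix.map_mul (f := Complex.ofRealHom)).symm
    _ = 1 := by simp [hV]

lemma complexificationQ_conjTranspose_mul_self :
    (complexificationQ κ)ᴴ * complexificationQ κ = 1 := by
  have hblocks : (fromBlocks (1 : Matrix κ κ ℂ) (Complex.I • 1) 1 (-(Complex.I • 1)))ᴴ *
      fromBlocks 1 (Complex.I • 1) 1 (-(Complex.I • 1)) =
        (2 : ℂ) • (1 : Matrix (κ ⊕ κ) (κ ⊕ κ) ℂ) := by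
    rw [fromBlocks_conjTranspose, fromBlocks_multiply, ← fromBlocks_one, fromBlocks_smul]
    simp [smul_smul, two_smul]
  rw [complexificationQ, conjTranspose_smul, smul_mul, Matrix.mul_smul, hblocks, smul_smul,
    smul_smul, star_inv₀, Complex.star_def, Complex.conj_ofReal]
  convert one_smul ℂ (1 : Matrix (κ ⊕ κ) (κ ⊕ κ) ℂ)
  have h0 : (Real.sqrt 2 : ℂ) ≠ 0 := by exact_mod_cast (by positivity : Real.sqrt 2 ≠ 0)
  field_simp
  exact Complex.ofReal_sqrt_two_sq.symm

lemma fromCols_conj_mul_complexificationQ (Θ : Matrix ι κ ℂ) :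
    fromCols Θ (Θ.map conj) * complexificationQ κ =
      (Real.sqrt 2 : ℂ) • (fromCols (Θ.map Complex.re) (-Θ.map Complex.im)).map (↑) := by
  have h2 := Complex.ofReal_sqrt_two_sq
  rw [complexificationQ, Matrix.mul_smul, fromCols_mul_fromBlocks]
  ext i (j | j) <;>
    simp only [fromCols_apply_inl, fromCols_apply_inr, Matrix.smul_apply, map_apply, Matrix.add_apply,
      Matrix.mul_one, Matrix.mul_smul, Matrix.mul_neg, smul_eq_mul, Matrix.neg_apply, Complex.ofReal_neg]
  · rw [Complex.add_conj]
    field_simp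
    push_cast
    linear_combination -(Θ i j).re * h2
  · rw [← sub_eq_add_neg, ← mul_sub, Complex.sub_conj]
    field_simp
    push_cast
    linear_combination (Θ i j).im * h2 + 2 * (Θ i j).im * Complex.I_sq

end

theorem stmt_8 (m n : ℕ)
    (Θ : Matrix (Fin n) (Fin m) ℂ)
    (B : Matrix (Fin n) (Fin m ⊕ Fin m) ℂ)
    (hBl : ∀ k j, B k (Sum.inl j) = Θ k j)
    (hBr : ∀ k j, B k (Sum.inr j) = starRingEnd ℂ (Θ k j))
    (Bhat : Matrix (Fin n) (Fin m ⊕ Fin m) ℝ)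
    (hBhatl : ∀ k j, Bhat k (Sum.inl j) = (Θ k j).re)
    (hBhatr : ∀ k j, Bhat k (Sum.inr j) = -(Θ k j).im)
    (Q : Matrix (Fin m ⊕ Fin m) (Fin m ⊕ Fin m) ℂ)
    (hQ : Q = ((Real.sqrt 2 : ℂ))⁻¹ •
      Matrix.fromBlocks (1 : Matrix (Fin m) (Fin m) ℂ) (Complex.I • 1) 1 (-(Complex.I • 1)))
    -- real singular value decomposition of B̂:
    (VhatB : Matrix (Fin m ⊕ Fin m) (Fin m ⊕ Fin m) ℝ)
    (UhatB : Matrix (Fin n) (Fin m ⊕ Fin m) ℝ)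
    (ShatB : Matrix (Fin m ⊕ Fin m) (Fin m ⊕ Fin m) ℝ)
    (hsvd : Bhat * VhatB = UhatB * ShatB)
    (hV : VhatBᵀ * VhatB = 1)
    (VtildeB : Matrix (Fin m ⊕ Fin m) (Fin m ⊕ Fin m) ℂ)
    (hVtilde : VtildeB = Q * VhatB.map (fun a => (a : ℂ))) :
    Qᴴ * Q = 1 ∧
    B * VtildeB = UhatB.map (fun a => (a : ℂ)) * ((Real.sqrt 2 • ShatB).map (fun a => (a : ℂ))) ∧
    VtildeBᴴ * VtildeB = 1 := by
  have hB : B = fromCols Θ (Θ.map conj) := by ext k (j | j) <;> simp [hBl, hBr]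
  have hBhat : Bhat = fromCols (Θ.map Complex.re) (-Θ.map Complex.im) := by
    ext k (j | j) <;> simp [hBhatl, hBhatr]
  have hQQ : Qᴴ * Q = 1 := hQ ▸ complexificationQ_conjTranspose_mul_self
  have hBQ : B * Q = (Real.sqrt 2 : ℂ) • Bhat.map (↑) := by
    rw [hB, hBhat, hQ]
    exact fromCols_conj_mul_complexificationQ Θ
  refine ⟨hQQ, ?_, ?_⟩
  · calc B * VtildeB = (Real.sqrt 2 : ℂ) • (Bhat * VhatB).map Complex.ofRealHom := by
          rw [hVtilde, ← Matrix.mul_assoc, hBQ, Matrix.smul_mul, Matrix.map_mul]; rfl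
      _ = UhatB.map (↑) * ((Real.sqrt 2 • ShatB).map (↑)) := by
          rw [hsvd, Matrix.map_mul, ← Matrix.mul_smul]
          congr 1
          ext i j
          simp
  · rw [hVtilde, conjTranspose_mul, Matrix.mul_assoc, ← Matrix.mul_assoc Qᴴ, hQQ,
      Matrix.one_mul, conjTranspose_map_ofReal_mul_self hV]
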